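/- Let T = {(x,y) ∈ ℝ² : 0 < x, 0 < y, x + y < 1} and write z = 1 − x − y. Define the projective Cassaigne map f : T → T (almost everywhere) by: f(x,y) = ((x−z)/(x+y), z/(x+y)) if x > z, and f(x,y) = (y/(1−x), x/(1−x)) if x < z. Let μ be the measure on ℝ² obtained by restricting Lebesgue measure to T and taking the density (x,y) ↦ 1/(2(1−x)(x+y)). Then the pushforward of μ under f equals μ; i.e. the density of the invariant measure of the projective Cassaigne algorithm on the unit simplex is proportional to 1/((1−x)(1−z)). -/

import Mathlib

open MeasureTheory Set

/-- The open unit simplex `T = {(x,y) : 0 < x, 0 < y, x + y < 1}` in the plane. -/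
def simplexT : Set (ℝ × ℝ) := {p | 0 < p.1 ∧ 0 < p.2 ∧ p.1 + p.2 < 1}

/-- The projective Cassaigne map in the coordinates `(x,y)`, with `z = 1 - x - y`:
`f(x,y) = ((x-z)/(x+y), z/(x+y))` if `x > z` and `f(x,y) = (y/(1-x), x/(1-x))` if `x < z`. -/
noncomputable def casProj : ℝ × ℝ → ℝ × ℝ := fun p =>
  if 1 - p.1 - p.2 < p.1 then
    ((p.1 - (1 - p.1 - p.2)) / (p.1 + p.2), (1 - p.1 - p.2) / (p.1 + p.2))
  else (p.2 / (1 - p.1), p.1 / (1 - p.1))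

/-- Lebesgue measure restricted to `T` with density `1/(2(1-x)(x+y))`. -/
noncomputable def casMeasure : Measure (ℝ × ℝ) :=
  (volume.restrict simplexT).withDensity fun p =>
    ENNReal.ofReal (1 / (2 * (1 - p.1) * (p.1 + p.2)))

/-!
Each branch of the projective Cassaigne map `f` sends its half of the simplex `T` (cut along the
Lebesgue-null line `x = z`) bijectively onto `T`, and its inverse is the projective action
`q ↦ [M q̂]` of a `3 × 3` matrix of determinant `-1`, where `q̂ = (x, y, 1)`. The Jacobian of such
an action is `|det M| / w³`, `w` being the third homogeneous coordinate of `M q̂` (here `1 + y`).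
Changing variables on both branches, invariance of `ρ = 1/(2(1-x)(x+y))` reduces to the transfer
identity `ρ(g₁ q) + ρ(g₂ q) = (1+y)³ ρ(q)` for the inverse branches `g₁, g₂`, that is
`(1+y)²/(2(1-x)) + (1+y)²/(2(x+y)) = (1+y)³/(2(1-x)(x+y))`, which holds as `(1-x) + (x+y) = 1+y`.
-/

open Matrix

theorem HasFDerivAt.div {𝕜 E : Type*} [NontriviallyNormedField 𝕜] [NormedAddCommGroup E]
    [NormedSpace 𝕜 E] {c d : E → 𝕜} {c' d' : E →L[𝕜] 𝕜} {x : E} (hc : HasFDerivAt c c' x)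
    (hd : HasFDerivAt d d' x) (hx : d x ≠ 0) :
    HasFDerivAt (fun y => c y / d y) ((d x ^ 2)⁻¹ • (d x • c' - c x • d')) x := by
  simp only [div_eq_mul_inv]
  refine (hc.mul ((hasFDerivAt_inv hx).comp x hd)).congr_fderiv ?_
  ext v
  simp only [_root_.add_apply, _root_.smul_apply, _root_.sub_apply, ContinuousLinearMap.comp_apply,
    Function.comp_apply, ContinuousLinearMap.toSpanSingleton_apply, smul_eq_mul]
  field_simp
  ring

theorem Set.InvOn.preimage_inter_eq_image {α β : Type*} {f : α → β} {g : β → α} {s : Set α}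
    {t : Set β} (h : InvOn g f s t) (hf : MapsTo f s t) (hg : MapsTo g t s) (u : Set β) :
    f ⁻¹' u ∩ s = g '' (u ∩ t) := by
  rw [h.2.image_inter', (h.symm.bijOn hg hf).image_eq]

noncomputable section

section ProjectiveAction

variable (M : Matrix (Fin 3) (Fin 3) ℝ)

def projAction (q : ℝ × ℝ) : ℝ × ℝ :=
  let v := M *ᵥ ![q.1, q.2, 1]
  (v 0 / v 2, v 1 / v 2)

lemma mulVec_chart_apply (q : ℝ × ℝ) (i : Fin 3) :
    (M *ᵥ ![q.1, q.2, 1]) i = M i 0 * q.1 + M i 1 * q.2 + M i 2 := by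
  simp [mulVec, dotProduct, Fin.sum_univ_three]

def jacobianProjAction (q : ℝ × ℝ) : ℝ := |M.det / (M *ᵥ ![q.1, q.2, 1]) 2 ^ 3|

lemma jacobianProjAction_nonneg (q : ℝ × ℝ) : 0 ≤ jacobianProjAction M q :=
  abs_nonneg _

@[fun_prop]
lemma measurable_jacobianProjAction : Measurable (jacobianProjAction M) := by
  unfold jacobianProjAction
  simp only [mulVec_chart_apply]
  fun_prop

@[fun_prop]
lemma measurable_projAction : Measurable (projAction M) := by
  unfold projAction
  simp only [mulVec_chart_apply]
  fun_prop

lemma hasFDerivAt_mulVec_chart (q : ℝ × ℝ) (i : Fin 3) :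
    HasFDerivAt (fun q : ℝ × ℝ => (M *ᵥ ![q.1, q.2, 1]) i)
      (M i 0 • ContinuousLinearMap.fst ℝ ℝ ℝ + M i 1 • ContinuousLinearMap.snd ℝ ℝ ℝ) q := by
  simp only [mulVec_chart_apply]
  exact ((hasFDerivAt_fst.const_mul _).add (hasFDerivAt_snd.const_mul _)).add_const _

def fderivProjAction (q : ℝ × ℝ) : ℝ × ℝ →L[ℝ] ℝ × ℝ :=
  let v := M *ᵥ ![q.1, q.2, 1]
  (toLin (.finTwoProd ℝ) (.finTwoProd ℝ)
    !![(v 2 * M 0 0 - v 0 * M 2 0) / v 2 ^ 2, (v 2 * M 0 1 - v 0 * M 2 1) / v 2 ^ 2;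
      (v 2 * M 1 0 - v 1 * M 2 0) / v 2 ^ 2, (v 2 * M 1 1 - v 1 * M 2 1) / v 2 ^ 2]
    ).toContinuousLinearMap

theorem hasFDerivAt_projAction {q : ℝ × ℝ} (hq : (M *ᵥ ![q.1, q.2, 1]) 2 ≠ 0) :
    HasFDerivAt (projAction M) (fderivProjAction M q) q := by
  have H := ((hasFDerivAt_mulVec_chart M q 0).div (hasFDerivAt_mulVec_chart M q 2) hq).prodMk
    ((hasFDerivAt_mulVec_chart M q 1).div (hasFDerivAt_mulVec_chart M q 2) hq)
  refine H.congr_fderiv ?_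
  rw [fderivProjAction, toLin_finTwoProd_toContinuousLinearMap]
  ext <;>
  simp only [ContinuousLinearMap.comp_apply, ContinuousLinearMap.inl_apply,
    ContinuousLinearMap.inr_apply, ContinuousLinearMap.prod_apply, _root_.add_apply,
    _root_.sub_apply, _root_.smul_apply, ContinuousLinearMap.coe_fst',
    ContinuousLinearMap.coe_snd', smul_eq_mul] <;>
  ring

theorem det_fderivProjAction {q : ℝ × ℝ} (hq : (M *ᵥ ![q.1, q.2, 1]) 2 ≠ 0) :
    (fderivProjAction M q).det = M.det / (M *ᵥ ![q.1, q.2, 1]) 2 ^ 3 := by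
  simp only [fderivProjAction, LinearMap.det_toContinuousLinearMap, LinearMap.det_toLin,
    det_fin_two_of, det_fin_three, mulVec_chart_apply]
  rw [mulVec_chart_apply] at hq
  field_simp
  ring

theorem lintegral_image_projAction (μ : Measure (ℝ × ℝ)) [μ.IsAddHaarMeasure] {t : Set (ℝ × ℝ)}
    (ht : MeasurableSet t) (hw : ∀ q ∈ t, (M *ᵥ ![q.1, q.2, 1]) 2 ≠ 0)
    (hinj : InjOn (projAction M) t) (f : ℝ × ℝ → ENNReal) :
    ∫⁻ p in projAction M '' t, f p ∂μ =
      ∫⁻ q in t, ENNReal.ofReal (jacobianProjAction M q) * f (projAction M q) ∂μ := by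
  rw [lintegral_image_eq_lintegral_abs_det_fderiv_mul μ ht
    (fun q hq => (hasFDerivAt_projAction M (hw q hq)).hasFDerivWithinAt) hinj f]
  exact setLIntegral_congr_fun ht fun q hq => by
    rw [det_fderivProjAction M (hw q hq), jacobianProjAction]

theorem setLIntegral_preimage_inter_eq_of_invOn (μ : Measure (ℝ × ℝ)) [μ.IsAddHaarMeasure]
    {F : ℝ × ℝ → ℝ × ℝ} {B T s : Set (ℝ × ℝ)} (hT : MeasurableSet T) (hs : MeasurableSet s)
    (hw : ∀ q ∈ T, (M *ᵥ ![q.1, q.2, 1]) 2 ≠ 0) (hinv : InvOn (projAction M) F B T)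
    (hF : MapsTo F B T) (hM : MapsTo (projAction M) T B) (f : ℝ × ℝ → ENNReal) :
    ∫⁻ p in F ⁻¹' s ∩ B, f p ∂μ =
      ∫⁻ q in s ∩ T, ENNReal.ofReal (jacobianProjAction M q) * f (projAction M q) ∂μ := by
  rw [hinv.preimage_inter_eq_image hF hM, lintegral_image_projAction M μ (hs.inter hT)
    (fun q hq => hw q hq.2) (hinv.2.injOn.mono inter_subset_right)]

end ProjectiveAction

def casDensity (p : ℝ × ℝ) : ℝ := 1 / (2 * (1 - p.1) * (p.1 + p.2))

def casBranch₁ : Set (ℝ × ℝ) := simplexT ∩ {p | 1 - p.1 - p.2 < p.1}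

def casBranch₂ : Set (ℝ × ℝ) := simplexT ∩ {p | p.1 < 1 - p.1 - p.2}

/-- The inverses `(a, b, c) ↦ (a + b, c, b)` and `(a, b, c) ↦ (b, a, b + c)` of the two branches
of the linear Cassaigne map, written in the homogeneous coordinates `[x : y : x + y + z]`. -/
def casInvMatrix₁ : Matrix (Fin 3) (Fin 3) ℝ := !![1, 1, 0; -1, -1, 1; 0, 1, 1]

def casInvMatrix₂ : Matrix (Fin 3) (Fin 3) ℝ := !![0, 1, 0; 1, 0, 0; 0, 1, 1]

@[fun_prop]
lemma measurable_casDensity : Measurable casDensity := by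
  unfold casDensity
  fun_prop

lemma casDensity_pos {p : ℝ × ℝ} (hp : p ∈ simplexT) : 0 < casDensity p := by
  obtain ⟨hx, hy, hxy⟩ := hp
  exact one_div_pos.2 (mul_pos (mul_pos two_pos (by linarith)) (by linarith))

lemma measurableSet_simplexT : MeasurableSet simplexT := by
  unfold simplexT
  measurability

lemma measurableSet_casBranch₁ : MeasurableSet casBranch₁ :=
  measurableSet_simplexT.inter (measurableSet_lt (by fun_prop) measurable_fst)

lemma measurableSet_casBranch₂ : MeasurableSet casBranch₂ :=
  measurableSet_simplexT.inter (measurableSet_lt measurable_fst (by fun_prop))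

lemma measurable_casProj : Measurable casProj :=
  Measurable.ite (measurableSet_lt (by fun_prop) measurable_fst) (by fun_prop) (by fun_prop)

lemma casMeasure_apply {t : Set (ℝ × ℝ)} (ht : MeasurableSet t) :
    casMeasure t = ∫⁻ p in t ∩ simplexT, ENNReal.ofReal (casDensity p) := by
  rw [casMeasure, withDensity_apply _ ht, Measure.restrict_restrict ht]
  rfl

lemma volume_setOf_snd_eq_zero {g : ℝ → ℝ} (hg : Measurable g) :
    volume {p : ℝ × ℝ | p.2 = g p.1} = 0 := by
  have hmeas : MeasurableSet {p : ℝ × ℝ | p.2 = g p.1} :=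
    measurableSet_eq_fun measurable_snd (hg.comp measurable_fst)
  rw [Measure.volume_eq_prod, Measure.measure_prod_null hmeas]
  refine Filter.Eventually.of_forall fun x => ?_
  have : Prod.mk x ⁻¹' {p : ℝ × ℝ | p.2 = g p.1} = {g x} := by
    ext y; simp
  simp [this]

lemma casBranch_union_ae_eq : (casBranch₁ ∪ casBranch₂ : Set (ℝ × ℝ)) =ᵐ[volume] simplexT := by
  refine ae_eq_set.2 ⟨?_, measure_mono_null ?_
    (volume_setOf_snd_eq_zero (g := fun x => 1 - 2 * x) (by fun_prop))⟩
  · have hsub : casBranch₁ ∪ casBranch₂ ⊆ simplexT :=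
      union_subset inter_subset_left inter_subset_left
    rw [sdiff_eq_empty.2 hsub, measure_empty]
  · rintro p ⟨hp, hnot⟩
    simp only [casBranch₁, casBranch₂, mem_union, mem_inter_iff, hp, true_and, not_or, not_lt,
      mem_ofPred_eq] at hnot ⊢
    linarith [hnot.1, hnot.2]

lemma setLIntegral_inter_simplexT_eq_add {A : Set (ℝ × ℝ)} (hA : MeasurableSet A)
    (f : ℝ × ℝ → ENNReal) :
    ∫⁻ p in A ∩ simplexT, f p =
      (∫⁻ p in A ∩ casBranch₁, f p) + ∫⁻ p in A ∩ casBranch₂, f p := by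
  have hdisj : Disjoint (A ∩ casBranch₁) (A ∩ casBranch₂) := by
    refine disjoint_left.2 fun p ⟨_, _, h₁⟩ ⟨_, _, h₂⟩ => ?_
    simp only [mem_ofPred_eq] at h₁ h₂
    linarith
  calc ∫⁻ p in A ∩ simplexT, f p = ∫⁻ p in A ∩ (casBranch₁ ∪ casBranch₂), f p :=
        setLIntegral_congr ((ae_eq_refl A).inter casBranch_union_ae_eq).symm
    _ = _ := by
      rw [inter_union_distrib_left, lintegral_union (hA.inter measurableSet_casBranch₂) hdisj]

lemma projAction_casInvMatrix₁ (q : ℝ × ℝ) :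
    projAction casInvMatrix₁ q = ((q.1 + q.2) / (1 + q.2), (1 - q.1 - q.2) / (1 + q.2)) := by
  ext <;>
  simp only [projAction, casInvMatrix₁, mulVec_chart_apply, of_apply, cons_val', cons_val_zero,
    cons_val_one, cons_val, cons_val_fin_one] <;>
  ring

lemma projAction_casInvMatrix₂ (q : ℝ × ℝ) :
    projAction casInvMatrix₂ q = (q.2 / (1 + q.2), q.1 / (1 + q.2)) := by
  ext <;>
  simp only [projAction, casInvMatrix₂, mulVec_chart_apply, of_apply, cons_val', cons_val_zero,
    cons_val_one, cons_val, cons_val_fin_one] <;>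
  ring

lemma casInvMatrix₁_mulVec_chart_two (q : ℝ × ℝ) :
    (casInvMatrix₁ *ᵥ ![q.1, q.2, 1]) 2 = 1 + q.2 := by
  simp only [casInvMatrix₁, mulVec_chart_apply, of_apply, cons_val', cons_val, cons_val_fin_one]
  ring

lemma casInvMatrix₂_mulVec_chart_two (q : ℝ × ℝ) :
    (casInvMatrix₂ *ᵥ ![q.1, q.2, 1]) 2 = 1 + q.2 := by
  simp only [casInvMatrix₂, mulVec_chart_apply, of_apply, cons_val', cons_val, cons_val_fin_one]
  ring

lemma det_casInvMatrix₁ : casInvMatrix₁.det = -1 := by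
  simp [det_fin_three, casInvMatrix₁]

lemma det_casInvMatrix₂ : casInvMatrix₂.det = -1 := by
  simp [det_fin_three, casInvMatrix₂]

lemma casProj_of_lt {p : ℝ × ℝ} (h : 1 - p.1 - p.2 < p.1) :
    casProj p = ((p.1 - (1 - p.1 - p.2)) / (p.1 + p.2), (1 - p.1 - p.2) / (p.1 + p.2)) :=
  if_pos h

lemma casProj_of_gt {p : ℝ × ℝ} (h : p.1 < 1 - p.1 - p.2) :
    casProj p = (p.2 / (1 - p.1), p.1 / (1 - p.1)) :=
  if_neg h.not_gt

lemma mapsTo_projAction_casInvMatrix₁ : MapsTo (projAction casInvMatrix₁) simplexT casBranch₁ := by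
  rintro q ⟨hx, hy, hxy⟩
  have hw : 0 < 1 + q.2 := by linarith
  rw [projAction_casInvMatrix₁]
  refine ⟨⟨by positivity, div_pos (by linarith) hw, ?_⟩, ?_⟩
  · rw [← add_div, div_lt_one hw]; linarith
  · simp only [mem_ofPred_eq]
    field_simp
    linarith

lemma mapsTo_projAction_casInvMatrix₂ : MapsTo (projAction casInvMatrix₂) simplexT casBranch₂ := by
  rintro q ⟨hx, hy, hxy⟩
  have hw : 0 < 1 + q.2 := by linarith
  rw [projAction_casInvMatrix₂]
  refine ⟨⟨by positivity, by positivity, ?_⟩, ?_⟩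
  · rw [← add_div, div_lt_one hw]; linarith
  · simp only [mem_ofPred_eq]
    field_simp
    linarith

lemma mapsTo_casProj_casBranch₁ : MapsTo casProj casBranch₁ simplexT := by
  rintro p ⟨⟨hx, hy, hxy⟩, hbr : 1 - p.1 - p.2 < p.1⟩
  have hw : 0 < p.1 + p.2 := by linarith
  rw [casProj_of_lt hbr]
  refine ⟨div_pos (by linarith) hw, div_pos (by linarith) hw, ?_⟩
  rw [← add_div, div_lt_one hw]; linarith

lemma mapsTo_casProj_casBranch₂ : MapsTo casProj casBranch₂ simplexT := by
  rintro p ⟨⟨hx, hy, hxy⟩, hbr : p.1 < 1 - p.1 - p.2⟩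
  have hw : 0 < 1 - p.1 := by linarith
  rw [casProj_of_gt hbr]
  refine ⟨div_pos hy hw, div_pos hx hw, ?_⟩
  rw [← add_div, div_lt_one hw]; linarith

lemma invOn_casBranch₁ : InvOn (projAction casInvMatrix₁) casProj casBranch₁ simplexT := by
  constructor
  · rintro p ⟨⟨hx, hy, -⟩, hbr : 1 - p.1 - p.2 < p.1⟩
    have hw : p.1 + p.2 ≠ 0 := by linarith
    rw [casProj_of_lt hbr, projAction_casInvMatrix₁]
    ext <;> field_simp <;> ring
  · intro q hq
    have hw : 1 + q.2 ≠ 0 := by linarith [hq.2.1]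
    rw [casProj_of_lt (mapsTo_projAction_casInvMatrix₁ hq).2, projAction_casInvMatrix₁]
    ext <;> field_simp <;> ring

lemma invOn_casBranch₂ : InvOn (projAction casInvMatrix₂) casProj casBranch₂ simplexT := by
  constructor
  · rintro p ⟨⟨-, hy, -⟩, hbr : p.1 < 1 - p.1 - p.2⟩
    have hw : 1 - p.1 ≠ 0 := by linarith
    rw [casProj_of_gt hbr, projAction_casInvMatrix₂]
    ext <;> field_simp <;> ring
  · intro q hq
    have hw : 1 + q.2 ≠ 0 := by linarith [hq.2.1]
    rw [casProj_of_gt (mapsTo_projAction_casInvMatrix₂ hq).2, projAction_casInvMatrix₂]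
    ext <;> field_simp <;> ring

lemma ofReal_casDensity_eq_transfer {q : ℝ × ℝ} (hq : q ∈ simplexT) :
    ENNReal.ofReal (casDensity q) =
      ENNReal.ofReal (jacobianProjAction casInvMatrix₁ q) *
          ENNReal.ofReal (casDensity (projAction casInvMatrix₁ q)) +
        ENNReal.ofReal (jacobianProjAction casInvMatrix₂ q) *
          ENNReal.ofReal (casDensity (projAction casInvMatrix₂ q)) := by
  have h₁ := casDensity_pos (mapsTo_projAction_casInvMatrix₁ hq).1
  have h₂ := casDensity_pos (mapsTo_projAction_casInvMatrix₂ hq).1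
  rw [← ENNReal.ofReal_mul' h₁.le, ← ENNReal.ofReal_mul' h₂.le,
    ← ENNReal.ofReal_add (mul_nonneg (jacobianProjAction_nonneg _ q) h₁.le)
      (mul_nonneg (jacobianProjAction_nonneg _ q) h₂.le)]
  obtain ⟨hx, hy, hxy⟩ := hq
  have hw : 0 < 1 + q.2 := by linarith
  have : 1 - q.1 ≠ 0 := by linarith
  have : q.1 + q.2 ≠ 0 := by linarith
  have hJ₁ : jacobianProjAction casInvMatrix₁ q = 1 / (1 + q.2) ^ 3 := by
    rw [jacobianProjAction, det_casInvMatrix₁, casInvMatrix₁_mulVec_chart_two, neg_div, abs_neg,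
      abs_of_pos (by positivity)]
  have hJ₂ : jacobianProjAction casInvMatrix₂ q = 1 / (1 + q.2) ^ 3 := by
    rw [jacobianProjAction, det_casInvMatrix₂, casInvMatrix₂_mulVec_chart_two, neg_div, abs_neg,
      abs_of_pos (by positivity)]
  have hρ₁ : casDensity (projAction casInvMatrix₁ q) = (1 + q.2) ^ 2 / (2 * (1 - q.1)) := by
    rw [projAction_casInvMatrix₁, casDensity, ← add_div, one_sub_div hw.ne',
      add_sub_add_right_eq_sub]
    field_simp
    ring
  have hρ₂ : casDensity (projAction casInvMatrix₂ q) = (1 + q.2) ^ 2 / (2 * (q.1 + q.2)) := by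
    rw [projAction_casInvMatrix₂, casDensity, ← add_div, one_sub_div hw.ne']
    field_simp
    ring
  congr 1
  rw [hJ₁, hJ₂, hρ₁, hρ₂, casDensity]
  field_simp
  ring

end

/-- The measure with density `1/(2(1-x)(x+y))` (proportional to `1/((1-x)(1-z))`,
`z = 1-x-y`) on the unit simplex is invariant under the projective Cassaigne algorithm. -/
theorem stmt_11 : casMeasure.map casProj = casMeasure := by
  ext s hs
  have hw₁ : ∀ q ∈ simplexT, (casInvMatrix₁ *ᵥ ![q.1, q.2, 1]) 2 ≠ 0 := fun q hq => by
    rw [casInvMatrix₁_mulVec_chart_two]; linarith [hq.2.1]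
  have hw₂ : ∀ q ∈ simplexT, (casInvMatrix₂ *ᵥ ![q.1, q.2, 1]) 2 ≠ 0 := fun q hq => by
    rw [casInvMatrix₂_mulVec_chart_two]; linarith [hq.2.1]
  rw [Measure.map_apply measurable_casProj hs, casMeasure_apply (measurable_casProj hs),
    casMeasure_apply hs, setLIntegral_inter_simplexT_eq_add (measurable_casProj hs),
    setLIntegral_preimage_inter_eq_of_invOn _ volume measurableSet_simplexT hs
      hw₁ invOn_casBranch₁ mapsTo_casProj_casBranch₁ mapsTo_projAction_casInvMatrix₁,
    setLIntegral_preimage_inter_eq_of_invOn _ volume measurableSet_simplexT hs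
      hw₂ invOn_casBranch₂ mapsTo_casProj_casBranch₂ mapsTo_projAction_casInvMatrix₂,
    ← lintegral_add_left (by fun_prop)]
  exact setLIntegral_congr_fun (hs.inter measurableSet_simplexT) fun q hq =>
    (ofReal_casDensity_eq_transfer hq.2).symm
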